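/- Let f ∈ WRPB and for ω ∈ F_{p^m}^* define N_sq(ω) = #{x : f(x) ∈ SQ and Tr^m(ωx) = 0}. Then N_sq(ω) = (p−1)p^{m−2}/2 if ω ∉ S_f. If ω ∈ S_f and m+s is even: N_sq(ω) = ½(p−1)(p^{m−2} − ε(p−1)√(p*)^{m+s−4}) when f*(ω) = 0 or f*(ω) ∈ NSQ, and N_sq(ω) = ½(p−1)(p^{m−2} + ε(p+1)√(p*)^{m+s−4}) when f*(ω) ∈ SQ. -/

import Mathlib

open scoped BigOperators Classical

noncomputable section

/-- The primitive `p`-th root of unity `ζ_p = exp(2πi/p)` in `ℂ`. -/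
def zetaC (p : ℕ) : ℂ := Complex.exp (2 * Real.pi * Complex.I / p)

/-- The additive character `a ↦ ζ_p^a` of `ZMod p` with values in `ℂ`. -/
def chi (p : ℕ) (a : ZMod p) : ℂ := zetaC p ^ a.val

/-- The principal square root of `p* = η₀(-1)·p`:  `√p` if `p ≡ 1 (mod 4)`,
and `i·√p` if `p ≡ 3 (mod 4)`. -/
def sqrtPstar (p : ℕ) : ℂ :=
  if p % 4 = 1 then (Real.sqrt p : ℂ) else Complex.I * (Real.sqrt p : ℂ)

/-- The Walsh transform `W_f(ω) = ∑_x ζ_p^{f(x) - Tr(ωx)}` of `f : F → ZMod p`,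
where `F` is a finite field of characteristic `p` and `Tr` is the trace to `ZMod p`. -/
def walsh (p : ℕ) {F : Type} [Field F] [Fintype F] [Algebra (ZMod p) F]
    (f : F → ZMod p) (ω : F) : ℂ :=
  ∑ x : F, chi p (f x - Algebra.trace (ZMod p) F (ω * x))

/-- `f` is a weakly regular `s`-plateaued *balanced* function in the class WRPB:
balanced, `f(0)=0`, homogeneous of even degree `t` with `gcd(t-1,p-1)=1`,
and weakly regular with sign `ε` and dual function `fstar` on the Walsh support. -/
structure IsWRPB (p m s : ℕ) {F : Type} [Field F] [Fintype F] [Algebra (ZMod p) F]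
    (f : F → ZMod p) (ε : ℤ) (fstar : F → ZMod p) : Prop where
  card_eq : Fintype.card F = p ^ m
  plateaued : ∀ ω : F, ‖walsh p f ω‖ ^ 2 = 0 ∨
      ‖walsh p f ω‖ ^ 2 = (p : ℝ) ^ (m + s)
  balanced : walsh p f 0 = 0
  map_zero : f 0 = 0
  homog : ∃ t : ℕ, Even t ∧ 0 < t ∧ Nat.gcd (t - 1) (p - 1) = 1 ∧
      ∀ a : ZMod p, a ≠ 0 → ∀ x : F, f (algebraMap (ZMod p) F a * x) = a ^ t * f x
  sign : ε = 1 ∨ ε = -1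
  weakly_regular : ∀ ω : F, ‖walsh p f ω‖ ^ 2 = (p : ℝ) ^ (m + s) →
      walsh p f ω = (ε : ℂ) * sqrtPstar p ^ (m + s) * chi p (fstar ω)
  fstar_eq_zero : ∀ ω : F, ‖walsh p f ω‖ ^ 2 ≠ (p : ℝ) ^ (m + s) → fstar ω = 0

/-!
Write `T x = Tr(ωx)` and `E(u) = #{x | f x - u T x ∈ SQ}`. Substituting `x ↦ w x` and using
`f(wx) = w^t f(x)` with `t` even gives `E(u) = E(1)` for every `u ≠ 0`, because `w ↦ w^(t-1)`
is a bijection of `F_p^*`. Counting the pairs `(u, x)` with `f x - u T x ∈ SQ` in the other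
order gives `E(0) + (p - 1) E(1) = |SQ| · #{T ≠ 0} + p N_sq(ω)`. The fibres of `f`, `T` and
`f - T` are read off from their character sums `∑ ζ_p^{g(x)}` (namely `0`, `0` and `W_f(ω)`),
since up to scaling the only integer relation among `1, ζ_p, …, ζ_p^(p-1)` is
`∑ ζ_p^k = 0`.
-/

open Finset Polynomial

section AdditiveCharacter

variable (p : ℕ) [NeZero p]

theorem zetaC_isPrimitiveRoot : IsPrimitiveRoot (zetaC p) p :=
  Complex.isPrimitiveRoot_exp p (NeZero.ne p)

def chiAddChar : AddChar (ZMod p) ℂ :=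
  AddChar.zmodChar p (zetaC_isPrimitiveRoot p).pow_eq_one

theorem chi_eq_one_iff {a : ZMod p} : chi p a = 1 ↔ a = 0 :=
  (AddChar.zmodChar_primitive_of_primitive_root p
    (zetaC_isPrimitiveRoot p)).zmod_char_eq_one_iff p a

variable {p}

theorem sum_chi_eq_zero_of_ne_zero {V : Type*} [AddCommGroup V] [Fintype V] {T : V →+ ZMod p}
    (hT : T ≠ 0) : ∑ x, chi p (T x) = 0 := by
  refine AddChar.sum_eq_zero_of_ne_one (ψ := (chiAddChar p).compAddMonoidHom T) ?_
  obtain ⟨x, hx⟩ := DFunLike.ne_iff.mp hT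
  exact AddChar.ne_one_iff.mpr ⟨x, (chi_eq_one_iff p).not.mpr hx⟩

end AdditiveCharacter

theorem eq_of_sum_intCast_mul_chi_eq_zero {p : ℕ} [hp : Fact p.Prime] {e : ZMod p → ℤ}
    (h : ∑ k, (e k : ℂ) * chi p k = 0) (k : ZMod p) : e k = e 0 := by
  have hζ := zetaC_isPrimitiveRoot p
  set Q : ℚ[X] := ∑ j : ZMod p, monomial j.val (e j : ℚ)
  have hQ : aeval (zetaC p) Q = 0 := by
    simpa [Q, aeval_monomial, chi] using h
  have hdvd : cyclotomic p ℚ ∣ Q :=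
    cyclotomic_eq_minpoly_rat hζ hp.out.pos ▸ minpoly.dvd ℚ _ hQ
  have hdeg : Q.natDegree ≤ (cyclotomic p ℚ).natDegree := by
    rw [natDegree_cyclotomic, Nat.totient_prime hp.out]
    exact natDegree_sum_le_of_forall_le _ _ fun j _ =>
      (natDegree_monomial_le _).trans (Nat.le_sub_one_of_lt (ZMod.val_lt j))
  have hQC := eq_leadingCoeff_mul_of_monic_of_dvd_of_natDegree_le
    (cyclotomic.monic p ℚ) hdvd hdeg
  have hcoeff (j : ZMod p) : (e j : ℚ) = Q.leadingCoeff := by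
    have := congrArg (coeff · j.val) hQC
    simpa [Q, finsetSum_coeff, coeff_monomial, (ZMod.val_injective p).eq_iff, cyclotomic_prime,
      coeff_X_pow, ZMod.val_lt] using this
  exact_mod_cast (hcoeff k).trans (hcoeff 0).symm

theorem sum_chi_comp_eq_sum_card_fiber {p : ℕ} [NeZero p] {X : Type*} [Fintype X]
    (g : X → ZMod p) :
    ∑ x, chi p (g x) = ∑ k, (#{x | g x = k} : ℂ) * chi p k := by
  rw [← sum_fiberwise' univ g (chi p)]
  simp [sum_const]

theorem exists_card_fiber_eq_of_sum_chi_eq {p : ℕ} [Fact p.Prime] {X : Type*} [Fintype X]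
    (g : X → ZMod p) {B : ℤ} {k₀ : ZMod p} (h : ∑ x, chi p (g x) = B * chi p k₀) :
    ∃ c : ℤ, p * c + B = Fintype.card X ∧
      ∀ k, (#{x | g x = k} : ℤ) = c + if k = k₀ then B else 0 := by
  set d : ZMod p → ℤ := fun k => #{x | g x = k} - if k = k₀ then B else 0
  have hd : ∑ k, (d k : ℂ) * chi p k = 0 := by
    simp [d, sub_mul, sum_sub_distrib, ite_mul, ← sum_chi_comp_eq_sum_card_fiber, h]
  have hconst (k : ZMod p) : (#{x | g x = k} : ℤ) = d 0 + if k = k₀ then B else 0 := by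
    rw [← eq_of_sum_intCast_mul_chi_eq_zero hd k]
    ring
  refine ⟨d 0, ?_, hconst⟩
  rw [← card_univ, card_eq_sum_card_fiberwise (fun x _ => mem_univ (g x))]
  push_cast
  simp [hconst, sum_add_distrib]

section QuadraticCounting

variable {K : Type*} [Field K] [Fintype K]

theorem two_mul_card_quadraticChar_eq_one [DecidableEq K] (hK : ringChar K ≠ 2) :
    (2 * #{a : K | quadraticChar K a = 1} : ℤ) = Fintype.card K - 1 := by
  have hterm (a : K) : (if quadraticChar K a = 1 then 2 else 0 : ℤ)
      = quadraticChar K a + if a = 0 then 0 else 1 := by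
    rcases eq_or_ne a 0 with rfl | ha
    · simp
    rcases quadraticChar_dichotomy ha with h | h <;> simp [h, ha]
  calc (2 * #{a : K | quadraticChar K a = 1} : ℤ)
      = ∑ a : K, if quadraticChar K a = 1 then 2 else 0 := by
        rw [sum_ite, sum_const_zero, add_zero, sum_const, nsmul_eq_mul, mul_comm]
    _ = ∑ a : K, (quadraticChar K a + if a = 0 then 0 else 1) := sum_congr rfl fun a _ => hterm a
    _ = Fintype.card K - 1 := by
        rw [sum_add_distrib, quadraticChar_sum_zero hK, zero_add, sum_ite, sum_const_zero,
          zero_add, sum_const, filter_ne', card_erase_of_mem (mem_univ _), card_univ,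
          nsmul_eq_mul, mul_one, Nat.cast_pred Fintype.card_pos]

theorem card_filter_sub_mul_eq (P : K → Prop) [DecidablePred P] (a : K) {b : K} (hb : b ≠ 0) :
    #{u | P (a - u * b)} = #{v | P v} :=
  card_equiv ((Equiv.mulRight₀ b hb).trans (Equiv.subLeft a)) (by simp)

theorem sum_card_filter_sub_mul [DecidableEq K] {X : Type*} [Fintype X] (P : K → Prop)
    [DecidablePred P] (f T : X → K) :
    ∑ u, #{x | P (f x - u * T x)}
      = #{v | P v} * #{x | T x ≠ 0} + Fintype.card K * #{x | P (f x) ∧ T x = 0} := by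
  have hfiber (x : X) : #{u | P (f x - u * T x)}
      = (if T x ≠ 0 then #{v | P v} else 0)
        + if P (f x) ∧ T x = 0 then Fintype.card K else 0 := by
    by_cases hT : T x = 0
    · by_cases hP : P (f x) <;> simp [hT, hP]
    · simp [hT, card_filter_sub_mul_eq P (f x) hT]
  calc ∑ u, #{x | P (f x - u * T x)} = ∑ x, #{u | P (f x - u * T x)} := by
        simp only [card_filter]
        exact sum_comm
    _ = _ := by
        simp only [hfiber, sum_add_distrib, ← sum_filter, sum_const, smul_eq_mul]
        ring

theorem card_filter_quadraticChar_sub_mul_eq [DecidableEq K] {V : Type*} [AddCommGroup V]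
    [Module K V] [Fintype V] {t : ℕ} (ht : Even t) (ht0 : 0 < t)
    (hcop : (t - 1).Coprime (Fintype.card K - 1)) {f : V → K}
    (hf : ∀ a : K, a ≠ 0 → ∀ x, f (a • x) = a ^ t * f x) (T : V →ₗ[K] K)
    {u : K} (hu : u ≠ 0) :
    #{x | quadraticChar K (f x - u * T x) = 1} = #{x | quadraticChar K (f x - T x) = 1} := by
  obtain ⟨w, hw⟩ : ∃ w : Kˣ, w ^ (t - 1) = (Units.mk0 u hu)⁻¹ :=
    (Nat.Coprime.pow_left_bijective
      (by rwa [Nat.card_eq_fintype_card, Fintype.card_units, Nat.coprime_comm])).2 _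
  have hwu : (w : K) ^ t * u = w := by
    have := congrArg ((↑) : Kˣ → K) hw
    push_cast [Units.val_mk0] at this
    rw [← Nat.sub_add_cancel ht0, pow_succ, mul_right_comm, this, inv_mul_cancel₀ hu, one_mul]
  have hχw : quadraticChar K ((w : K) ^ t) = 1 := by
    obtain ⟨r, rfl⟩ := ht
    rw [map_pow, ← two_mul, pow_mul, quadraticChar_sq_one w.ne_zero, one_pow]
  refine card_equiv (MulAction.toPerm w) fun x => ?_
  have hx : f ((w : K) • x) - T ((w : K) • x) = (w : K) ^ t * (f x - u * T x) := by
    rw [hf _ w.ne_zero, map_smul, smul_eq_mul]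
    linear_combination (T x) * hwu
  simp only [mem_filter, mem_univ, true_and, MulAction.toPerm_apply, Units.smul_def, hx,
    map_mul, hχw, one_mul]

theorem card_filter_quadraticChar_add_mul_eq [DecidableEq K] {V : Type*} [AddCommGroup V]
    [Module K V] [Fintype V] {t : ℕ} (ht : Even t) (ht0 : 0 < t)
    (hcop : (t - 1).Coprime (Fintype.card K - 1)) {f : V → K}
    (hf : ∀ a : K, a ≠ 0 → ∀ x, f (a • x) = a ^ t * f x) (T : V →ₗ[K] K) :
    #{x | quadraticChar K (f x) = 1}
        + (Fintype.card K - 1) * #{x | quadraticChar K (f x - T x) = 1}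
      = #{v | quadraticChar K v = 1} * #{x | T x ≠ 0}
        + Fintype.card K * #{x | quadraticChar K (f x) = 1 ∧ T x = 0} := by
  have hcount := sum_card_filter_sub_mul (fun v => quadraticChar K v = 1) f T
  rw [← add_sum_erase _ _ (mem_univ 0), sum_const_nat fun u hu =>
    card_filter_quadraticChar_sub_mul_eq ht ht0 hcop hf T (ne_of_mem_erase hu),
    card_erase_of_mem (mem_univ _), card_univ] at hcount
  simpa using hcount

theorem card_filter_comp_eq_of_card_fiber {X Y : Type*} [Fintype X] [Fintype Y] [DecidableEq Y]
    (g : X → Y) (P : Y → Prop) [DecidablePred P] {c B : ℤ} {y₀ : Y}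
    (hfib : ∀ y, (#{x | g x = y} : ℤ) = c + if y = y₀ then B else 0) :
    (#{x | P (g x)} : ℤ) = #{y | P y} * c + if P y₀ then B else 0 := by
  have hsum : #{x | P (g x)} = ∑ y ∈ {y | P y}, #{x | g x = y} := by
    rw [sum_card_fiberwise_eq_card_filter]
    simp
  push_cast [hsum, hfib]
  rw [sum_add_distrib, sum_const, sum_ite_eq']
  simp [mul_comm]

end QuadraticCounting

theorem sq_mul_card_quadraticChar_eq_one_and_eq_zero {p : ℕ} [Fact p.Prime] {V : Type*}
    [AddCommGroup V] [Module (ZMod p) V] [Fintype V] {t : ℕ} (ht : Even t) (ht0 : 0 < t)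
    (hcop : (t - 1).Coprime (p - 1)) {f : V → ZMod p}
    (hf : ∀ a : ZMod p, a ≠ 0 → ∀ x, f (a • x) = a ^ t * f x)
    (hbal : ∑ x, chi p (f x) = 0)
    {T : V →ₗ[ZMod p] ZMod p} (hT : T ≠ 0) {B : ℤ} {k₀ : ZMod p}
    (hW : ∑ x, chi p (f x - T x) = B * chi p k₀) :
    (p ^ 2 * #{x | quadraticChar (ZMod p) (f x) = 1 ∧ T x = 0} : ℤ)
      = #{a : ZMod p | quadraticChar (ZMod p) a = 1} * (Fintype.card V - (p - 1) * B)
        + if quadraticChar (ZMod p) k₀ = 1 then p * (p - 1) * B else 0 := by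
  have hcount := card_filter_quadraticChar_add_mul_eq ht ht0 (by rwa [ZMod.card]) hf T
  rw [ZMod.card] at hcount
  obtain ⟨cf, hcf, hfibf⟩ := exists_card_fiber_eq_of_sum_chi_eq f (B := 0) (k₀ := 0)
    (by rw [hbal]; simp)
  have hTsum : ∑ x, chi p (T x) = 0 :=
    sum_chi_eq_zero_of_ne_zero (T := T.toAddMonoidHom) fun h =>
      hT (LinearMap.ext fun x => DFunLike.congr_fun h x)
  obtain ⟨cT, hcT, hfibT⟩ := exists_card_fiber_eq_of_sum_chi_eq T (B := 0) (k₀ := 0)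
    (by rw [hTsum]; simp)
  obtain ⟨c, hc, hfib⟩ := exists_card_fiber_eq_of_sum_chi_eq (fun x => f x - T x) hW
  have hE₀ := card_filter_comp_eq_of_card_fiber f (fun v => quadraticChar (ZMod p) v = 1) hfibf
  have hE₁ := card_filter_comp_eq_of_card_fiber _ (fun v => quadraticChar (ZMod p) v = 1) hfib
  have hker : (#{x | T x ≠ 0} : ℤ) = Fintype.card V - cT := by
    have hsplit := card_filter_add_card_filter_not (s := univ) (fun x => T x = 0)
    rw [card_univ] at hsplit
    simp only [← ne_eq] at hsplit
    have hT0 := hfibT 0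
    simp only [ite_self, add_zero] at hT0
    omega
  simp only [ite_self, add_zero] at hE₀
  have hcount' := congrArg (Nat.cast : ℕ → ℤ) hcount
  push_cast [Nat.cast_pred (Fact.out : p.Prime).pos] at hcount'
  rw [hE₀, hE₁, hker] at hcount'
  have hδ : (if quadraticChar (ZMod p) k₀ = 1 then (p * (p - 1) * B : ℤ) else 0)
      = p * (p - 1) * if quadraticChar (ZMod p) k₀ = 1 then B else 0 := by
    split_ifs <;> ring
  set S : ℤ := Nat.cast #{a : ZMod p | quadraticChar (ZMod p) a = 1}
  linear_combination (-p : ℤ) * hcount' + S * hcf + S * hcT + (p - 1) * S * hc - hδ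

def pStar (p : ℕ) : ℤ := if p % 4 = 1 then p else -p

theorem sqrtPstar_sq (p : ℕ) : sqrtPstar p ^ 2 = pStar p := by
  unfold sqrtPstar pStar
  split_ifs <;> simp [mul_pow, ← Complex.ofReal_pow]

theorem pStar_sq (p : ℕ) : pStar p ^ 2 = p ^ 2 := by
  unfold pStar
  split_ifs <;> simp

theorem sqrtPstar_zpow_two_mul_sub_four (p u : ℕ) [NeZero p] :
    sqrtPstar p ^ (2 * (u : ℤ) - 4) = (pStar p : ℂ) ^ u / (p : ℂ) ^ 2 := by
  have hsq : sqrtPstar p ^ 2 ≠ 0 := by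
    rw [sqrtPstar_sq, Int.cast_ne_zero, ← pow_ne_zero_iff two_ne_zero, pStar_sq]
    exact pow_ne_zero _ (Nat.cast_ne_zero.mpr (NeZero.ne p))
  rw [zpow_sub₀ (ne_zero_pow two_ne_zero hsq), zpow_mul,
    show (4 : ℤ) = 2 * (2 : ℕ) by norm_num, zpow_mul, zpow_natCast, zpow_natCast, zpow_ofNat,
    sqrtPstar_sq]
  congr 1
  exact_mod_cast pStar_sq p

namespace IsWRPB

variable {p m s : ℕ} {F : Type} [Field F] [Fintype F] [Algebra (ZMod p) F] {f : F → ZMod p}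
  {ε : ℤ} {fstar : F → ZMod p}

theorem walsh_eq_zero (hf : IsWRPB p m s f ε fstar) {ω : F}
    (hW : ‖walsh p f ω‖ ^ 2 ≠ (p : ℝ) ^ (m + s)) : walsh p f ω = 0 :=
  norm_eq_zero.mp <| (pow_eq_zero_iff two_ne_zero).mp <| (hf.plateaued ω).resolve_right hW

theorem walsh_eq_of_add_self (hf : IsWRPB p m s f ε fstar) {ω : F}
    (hW : ‖walsh p f ω‖ ^ 2 = (p : ℝ) ^ (m + s)) {u : ℕ} (hu : m + s = u + u) :
    walsh p f ω = (ε * pStar p ^ u : ℤ) * chi p (fstar ω) := by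
  rw [hf.weakly_regular ω hW, hu, ← two_mul, pow_mul, sqrtPstar_sq]
  push_cast
  ring

theorem two_mul_sq_mul_card_quadraticChar_eq_one_and_trace_eq_zero [Fact p.Prime] (hp2 : p ≠ 2)
    (hf : IsWRPB p m s f ε fstar) {ω : F} (hω : ω ≠ 0) {B : ℤ} {k₀ : ZMod p}
    (hW : walsh p f ω = B * chi p k₀) :
    (2 * p ^ 2 *
        #{x | quadraticChar (ZMod p) (f x) = 1 ∧ Algebra.trace (ZMod p) F (ω * x) = 0} : ℤ)
      = (p - 1) * (p ^ m - (p - 1) * B)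
        + if quadraticChar (ZMod p) k₀ = 1 then 2 * p * (p - 1) * B else 0 := by
  obtain ⟨t, ht, ht0, hcop, hhom⟩ := hf.homog
  have hT : Algebra.trace (ZMod p) F ∘ₗ LinearMap.mulLeft (ZMod p) ω ≠ 0 := fun h =>
    hω <| (traceForm_nondegenerate (ZMod p) F).1 ω fun x => by
      simpa using LinearMap.congr_fun h x
  have key : (p ^ 2 * #{x | quadraticChar (ZMod p) (f x) = 1 ∧
        Algebra.trace (ZMod p) F (ω * x) = 0} : ℤ)
      = #{a : ZMod p | quadraticChar (ZMod p) a = 1} * (p ^ m - (p - 1) * B)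
        + if quadraticChar (ZMod p) k₀ = 1 then p * (p - 1) * B else 0 := by
    simpa [hf.card_eq] using sq_mul_card_quadraticChar_eq_one_and_eq_zero ht ht0 hcop
      (fun a ha x => by rw [Algebra.smul_def]; exact hhom a ha x)
      (by simpa [walsh] using hf.balanced) hT hW
  have hS := two_mul_card_quadraticChar_eq_one (K := ZMod p) (by rwa [ZMod.ringChar_zmod_n])
  rw [ZMod.card] at hS
  split_ifs at key ⊢ <;>
    linear_combination 2 * key + ((p : ℤ) ^ m - (p - 1) * B) * hS

end IsWRPB

theorem stmt9_general (p m s : ℕ) [Fact p.Prime] (hodd : Odd p)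
    (F : Type) [Field F] [Fintype F] [Algebra (ZMod p) F]
    (f : F → ZMod p) (ε : ℤ) (fstar : F → ZMod p)
    (hf : IsWRPB p m s f ε fstar) :
    ∀ ω : F, ω ≠ 0 →
      (‖walsh p f ω‖ ^ 2 ≠ (p : ℝ) ^ (m + s) →
        (((Finset.univ.filter fun x : F =>
            quadraticChar (ZMod p) (f x) = 1 ∧ Algebra.trace (ZMod p) F (ω * x) = 0).card : ℂ) =
          ((p : ℂ) - 1) * (p : ℂ) ^ ((m : ℤ) - 2) / 2)) ∧
      (‖walsh p f ω‖ ^ 2 = (p : ℝ) ^ (m + s) → Even (m + s) →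
        ((fstar ω = 0 ∨ quadraticChar (ZMod p) (fstar ω) = -1) →
          (((Finset.univ.filter fun x : F =>
              quadraticChar (ZMod p) (f x) = 1 ∧
                Algebra.trace (ZMod p) F (ω * x) = 0).card : ℂ) =
            ((p : ℂ) - 1) / 2 * ((p : ℂ) ^ ((m : ℤ) - 2) -
              (ε : ℂ) * ((p : ℂ) - 1) * sqrtPstar p ^ ((m : ℤ) + (s : ℤ) - 4)))) ∧
        (quadraticChar (ZMod p) (fstar ω) = 1 →
          (((Finset.univ.filter fun x : F =>
              quadraticChar (ZMod p) (f x) = 1 ∧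
                Algebra.trace (ZMod p) F (ω * x) = 0).card : ℂ) =
            ((p : ℂ) - 1) / 2 * ((p : ℂ) ^ ((m : ℤ) - 2) +
              (ε : ℂ) * ((p : ℂ) + 1) * sqrtPstar p ^ ((m : ℤ) + (s : ℤ) - 4))))) := by
  intro ω hω
  have hcount {B : ℤ} {k₀ : ZMod p} (hW : walsh p f ω = B * chi p k₀) :=
    congrArg (Int.cast : ℤ → ℂ) <|
      hf.two_mul_sq_mul_card_quadraticChar_eq_one_and_trace_eq_zero
        (hodd.ne_two_of_dvd_nat dvd_rfl) hω hW
  have hp : (p : ℂ) ≠ 0 := Nat.cast_ne_zero.mpr (NeZero.ne p)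
  have hpm : (p : ℂ) ^ ((m : ℤ) - 2) = p ^ m / p ^ 2 := by
    rw [zpow_sub₀ hp, zpow_natCast, zpow_two, sq]
  refine ⟨fun hW => ?_, fun hW ⟨u, hu⟩ => ?_⟩
  · have key := hcount (B := 0) (k₀ := 0) (by simp [hf.walsh_eq_zero hW])
    push_cast at key
    rw [if_neg (by simp)] at key
    rw [hpm]
    field_simp
    linear_combination key
  · have key := hcount (hf.walsh_eq_of_add_self hW hu)
    push_cast at key
    rw [hpm, show (m : ℤ) + s - 4 = 2 * (u : ℤ) - 4 by omega, sqrtPstar_zpow_two_mul_sub_four]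
    refine ⟨fun hnsq => ?_, fun hsq => ?_⟩
    · rw [if_neg (by rcases hnsq with h | h <;> simp [h])] at key
      field_simp
      linear_combination key
    · rw [if_pos hsq] at key
      field_simp
      linear_combination key

/-- Evaluation of `N_sq(ω) = #{x : f(x) ∈ SQ ∧ Tr(ωx) = 0}` for `f ∈ WRPB`:
the value off the Walsh support, and the values on the support when `m+s` is even. -/
theorem stmt9 (p m s : ℕ) [Fact p.Prime] (hodd : Odd p) (hm : 0 < m)
    (F : Type) [Field F] [Fintype F] [Algebra (ZMod p) F]
    (f : F → ZMod p) (ε : ℤ) (fstar : F → ZMod p)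
    (hf : IsWRPB p m s f ε fstar) :
    ∀ ω : F, ω ≠ 0 →
      (‖walsh p f ω‖ ^ 2 ≠ (p : ℝ) ^ (m + s) →
        (((Finset.univ.filter fun x : F =>
            quadraticChar (ZMod p) (f x) = 1 ∧ Algebra.trace (ZMod p) F (ω * x) = 0).card : ℂ) =
          ((p : ℂ) - 1) * (p : ℂ) ^ ((m : ℤ) - 2) / 2)) ∧
      (‖walsh p f ω‖ ^ 2 = (p : ℝ) ^ (m + s) → Even (m + s) →
        ((fstar ω = 0 ∨ quadraticChar (ZMod p) (fstar ω) = -1) →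
          (((Finset.univ.filter fun x : F =>
              quadraticChar (ZMod p) (f x) = 1 ∧
                Algebra.trace (ZMod p) F (ω * x) = 0).card : ℂ) =
            ((p : ℂ) - 1) / 2 * ((p : ℂ) ^ ((m : ℤ) - 2) -
              (ε : ℂ) * ((p : ℂ) - 1) * sqrtPstar p ^ ((m : ℤ) + (s : ℤ) - 4)))) ∧
        (quadraticChar (ZMod p) (fstar ω) = 1 →
          (((Finset.univ.filter fun x : F =>
              quadraticChar (ZMod p) (f x) = 1 ∧
                Algebra.trace (ZMod p) F (ω * x) = 0).card : ℂ) =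
            ((p : ℂ) - 1) / 2 * ((p : ℂ) ^ ((m : ℤ) - 2) +
              (ε : ℂ) * ((p : ℂ) + 1) * sqrtPstar p ^ ((m : ℤ) + (s : ℤ) - 4))))) :=
  stmt9_general p m s hodd F f ε fstar hf
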